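/- Convergence of accelerated gradient descent in iterate distance (Lemma 13): let h : ℝ^d → ℝ be differentiable, μ_h-strongly convex with L_h-Lipschitz continuous gradient, 0 < μ_h ≤ L_h, κ_h := L_h/μ_h, and let z* be the unique minimizer of h. Given z₀ ∈ ℝ^d, define z̃₀ := z₀ and, for k ≥ 0, z_{k+1} := z̃_k − (1/L_h) ∇h(z̃_k) and z̃_{k+1} := z_{k+1} + ((√κ_h − 1)/(√κ_h + 1))(z_{k+1} − z_k). Then for every K ≥ 0, ‖z_K − z*‖² ≤ (1 + κ_h)(1 − 1/√κ_h)^K ‖z₀ − z*‖². -/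

import Mathlib

/-!
With `s = √(L/μ)`, the Lyapunov function `Φ_k = h(z_k) - h(z*) + μ/2 ‖v_k - z*‖²`, built on the
auxiliary sequence `v_k = (s + 1) z̃_k - s z_k`, contracts by the factor `1 - 1/s` at every step.
The contraction is a weighted sum of three first-order inequalities at `z̃_k`: the descent of the
gradient step, strong convexity towards `z*` (weight `1/s`) and convexity towards `z_k`
(weight `1 - 1/s`). Finally `μ/2 ‖z_K - z*‖² ≤ Φ_K` by strong convexity and
`Φ_0 ≤ (L + μ)/2 ‖z_0 - z*‖²` by the descent lemma, both using `∇h(z*) = 0`.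
-/

noncomputable section
open scoped RealInnerProductSpace
open Set

abbrev EV (n : ℕ) : Type := EuclideanSpace ℝ (Fin n)

theorem ConvexOn.add_le_of_hasFDerivAt {E : Type*} [NormedAddCommGroup E] [NormedSpace ℝ E]
    {s : Set E} {f : E → ℝ} {f' : E →L[ℝ] ℝ} {x y : E} (hf : ConvexOn ℝ s f)
    (hx : x ∈ s) (hy : y ∈ s) (hf' : HasFDerivAt f f' x) :
    f x + f' (y - x) ≤ f y := by
  have hline : ConvexOn ℝ (AffineMap.lineMap x y ⁻¹' s) (f ∘ AffineMap.lineMap (k := ℝ) x y) :=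
    hf.comp_affineMap _
  have hderiv : HasDerivAt (f ∘ AffineMap.lineMap (k := ℝ) x y) (f' (y - x)) 0 :=
    HasFDerivAt.comp_hasDerivAt (l := f) 0 (by simpa using hf') AffineMap.hasDerivAt_lineMap
  have := hline.le_slope_of_hasDerivAt (by simpa using hx) (by simpa using hy) one_pos hderiv
  simp only [slope_def_field, Function.comp_apply, AffineMap.lineMap_apply_one,
    AffineMap.lineMap_apply_zero, sub_zero, div_one] at this
  linarith [map_sub f' y x]

section

variable {E : Type*} [NormedAddCommGroup E] [InnerProductSpace ℝ E]

theorem norm_add_add_sq_real (p q r : E) :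
    ‖p + q + r‖ ^ 2 = ‖p‖ ^ 2 + ‖q‖ ^ 2 + ‖r‖ ^ 2 + 2 * (⟪p, q⟫ + ⟪p, r⟫ + ⟪q, r⟫) := by
  rw [norm_add_sq_real, norm_add_sq_real, inner_add_left]
  ring

theorem smul_sub_smul_of_momentum {s : ℝ} {z z' zt' : E} (hs : s + 1 ≠ 0)
    (hmom : zt' = z' + ((s - 1) / (s + 1)) • (z' - z)) :
    (s + 1) • zt' - s • z' = s • z' - (s - 1) • z := by
  rw [hmom]
  match_scalars
  · field_simp
    ring
  · field_simp

variable [CompleteSpace E]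

theorem StrongConvexOn.add_inner_add_le_of_hasGradientAt {s : Set E} {f : E → ℝ} {m : ℝ}
    {f' x y : E} (hf : StrongConvexOn s m f) (hx : x ∈ s) (hy : y ∈ s)
    (hf' : HasGradientAt f f' x) :
    f x + ⟪f', y - x⟫ + m / 2 * ‖y - x‖ ^ 2 ≤ f y := by
  have hsq := (hasStrictFDerivAt_norm_sq x).hasFDerivAt.const_mul (m / 2)
  have hconv := (strongConvexOn_iff_convex.mp hf).add_le_of_hasFDerivAt hx hy
    ((hasGradientAt_iff_hasFDerivAt.mp hf').sub hsq)
  have hexp : ‖y‖ ^ 2 = ‖x‖ ^ 2 + 2 * ⟪x, y - x⟫ + ‖y - x‖ ^ 2 := by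
    rw [← norm_add_sq_real, add_sub_cancel]
  simp only [sub_apply, InnerProductSpace.toDual_apply_apply, smul_apply, coe_innerSL_apply,
    nsmul_eq_mul, Nat.cast_ofNat, smul_eq_mul] at hconv
  rw [hexp] at hconv
  linarith

theorem le_add_inner_gradient_add_of_lipschitz {f : E → ℝ} {L : ℝ} (hf : Differentiable ℝ f)
    (hlip : ∀ a b, ‖gradient f a - gradient f b‖ ≤ L * ‖a - b‖) (x y : E) :
    f y ≤ f x + ⟪gradient f x, y - x⟫ + L / 2 * ‖y - x‖ ^ 2 := by
  set v := y - x
  have hline (t : ℝ) :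
      HasDerivAt (fun t : ℝ => f (x + t • v)) ⟪gradient f (x + t • v), v⟫ t := by
    have := (hasGradientAt_iff_hasFDerivAt.mp (hf (x + t • v)).hasGradientAt).comp_hasDerivAt t
      (((hasDerivAt_id t).smul_const v).const_add x)
    exact this.congr_deriv (by simp)
  have hbound (t : ℝ) :
      HasDerivAt (fun t : ℝ => f x + t * ⟪gradient f x, v⟫ + L / 2 * t ^ 2 * ‖v‖ ^ 2)
        (⟪gradient f x, v⟫ + L * t * ‖v‖ ^ 2) t := by
    have := (((hasDerivAt_id t).mul_const ⟪gradient f x, v⟫).const_add (f x)).add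
      (((hasDerivAt_pow 2 t).const_mul (L / 2)).mul_const (‖v‖ ^ 2))
    exact this.congr_deriv (by simp only [Nat.cast_ofNat, Nat.add_one_sub_one, pow_one]; ring)
  have hslope : ∀ t ∈ Ico (0 : ℝ) 1,
      ⟪gradient f (x + t • v), v⟫ ≤ ⟪gradient f x, v⟫ + L * t * ‖v‖ ^ 2 := by
    intro t ht
    have h1 := real_inner_le_norm (gradient f (x + t • v) - gradient f x) v
    have h2 := hlip (x + t • v) x
    rw [add_sub_cancel_left, norm_smul, Real.norm_of_nonneg ht.1] at h2
    rw [inner_sub_left] at h1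
    nlinarith [norm_nonneg v]
  have := image_le_of_deriv_right_le_deriv_boundary
    (fun t _ => (hline t).continuousAt.continuousWithinAt) (fun t _ => (hline t).hasDerivWithinAt)
    (by simp) (fun t _ => (hbound t).continuousAt.continuousWithinAt)
    (fun t _ => (hbound t).hasDerivWithinAt) hslope (right_mem_Icc.mpr zero_le_one)
  simpa [v] using this

theorem apply_sub_gradient_le {f : E → ℝ} {L : ℝ} (hf : Differentiable ℝ f)
    (hlip : ∀ a b, ‖gradient f a - gradient f b‖ ≤ L * ‖a - b‖) (x : E) :
    f (x - (1 / L) • gradient f x) ≤ f x - ‖gradient f x‖ ^ 2 / (2 * L) := by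
  rcases eq_or_ne L 0 with rfl | hL
  · simp
  have := le_add_inner_gradient_add_of_lipschitz hf hlip x (x - (1 / L) • gradient f x)
  rw [sub_sub_cancel_left, inner_neg_right, norm_neg, real_inner_smul_right,
    real_inner_self_eq_norm_sq, norm_smul, mul_pow, Real.norm_eq_abs, sq_abs] at this
  convert this using 1
  field_simp
  ring

def agdLyapunov (f : E → ℝ) (μ : ℝ) (xstar x v : E) : ℝ :=
  f x - f xstar + μ / 2 * ‖v - xstar‖ ^ 2

theorem agdLyapunov_step_le {f : E → ℝ} {μ s L : ℝ} {xstar x y x' : E} (hμ : 0 < μ) (hs : 1 ≤ s)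
    (hL : L = μ * s ^ 2) (hsc : StrongConvexOn univ μ f) (hf : Differentiable ℝ f)
    (hlip : ∀ a b, ‖gradient f a - gradient f b‖ ≤ L * ‖a - b‖)
    (hx' : x' = y - (1 / L) • gradient f y) :
    agdLyapunov f μ xstar x' (s • x' - (s - 1) • x)
      ≤ (1 - 1 / s) * agdLyapunov f μ xstar x ((s + 1) • y - s • x) := by
  have hs0 : 0 < s := by linarith
  subst hL
  unfold agdLyapunov
  set g := gradient f y
  set a := (s + 1) • y - s • x - xstar
  set b := y - xstar
  have hdesc : 2 * (μ * s ^ 2) * f x' ≤ 2 * (μ * s ^ 2) * f y - ‖g‖ ^ 2 := by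
    have := hx' ▸ apply_sub_gradient_le hf hlip y
    rw [le_sub_comm, div_le_iff₀ (by positivity)] at this
    linarith
  have hstar : f y - ⟪b, g⟫ + μ / 2 * ‖b‖ ^ 2 ≤ f xstar := by
    have := hsc.add_inner_add_le_of_hasGradientAt (mem_univ y) (mem_univ xstar)
      (hf y).hasGradientAt
    rwa [← neg_sub, inner_neg_right, norm_neg, real_inner_comm] at this
  have hprev : s * f y + (⟪b, g⟫ - ⟪a, g⟫) ≤ s * f x := by
    have hconv := hsc.add_inner_add_le_of_hasGradientAt (mem_univ y) (mem_univ x)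
      (hf y).hasGradientAt
    have hxy : s • (x - y) = b - a := by simp only [a, b]; module
    have hinner : s * ⟪g, x - y⟫ = ⟪b, g⟫ - ⟪a, g⟫ := by
      rw [← real_inner_smul_right, hxy, inner_sub_right, real_inner_comm g, real_inner_comm g]
    have : 0 ≤ μ / 2 * ‖x - y‖ ^ 2 := by positivity
    nlinarith
  have hnext : (μ * s) • (s • x' - (s - 1) • x - xstar) = (μ * (s - 1)) • a + μ • b - g := by
    simp only [hx', a, b]
    match_scalars <;> field_simp <;> ring
  have hexpand : (μ * s) ^ 2 * ‖s • x' - (s - 1) • x - xstar‖ ^ 2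
      = (μ * (s - 1)) ^ 2 * ‖a‖ ^ 2 + μ ^ 2 * ‖b‖ ^ 2 + ‖g‖ ^ 2 + 2 * μ ^ 2 * (s - 1) * ⟪a, b⟫
        - 2 * μ * (s - 1) * ⟪a, g⟫ - 2 * μ * ⟪b, g⟫ := by
    rw [← abs_of_pos (by positivity : 0 < μ * s), ← Real.norm_eq_abs, ← mul_pow, ← norm_smul,
      hnext, sub_eq_add_neg, norm_add_add_sq_real]
    simp only [norm_neg, inner_neg_right, norm_smul, real_inner_smul_left, real_inner_smul_right,
      mul_pow, Real.norm_eq_abs, sq_abs]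
    ring
  have hs1 : 0 ≤ s - 1 := by linarith
  have hab : 0 ≤ μ ^ 2 * (s - 1) * (‖a‖ ^ 2 - 2 * ⟪a, b⟫ + ‖b‖ ^ 2) := by
    rw [← norm_sub_sq_real]
    positivity
  have hprev' := mul_le_mul_of_nonneg_left hprev (by positivity : 0 ≤ 2 * μ * (s - 1))
  rw [one_sub_div hs0.ne', div_mul_eq_mul_div (s - 1) s, le_div_iff₀ hs0]
  refine le_of_mul_le_mul_left ?_ (by positivity : 0 < 2 * μ * s)
  linear_combination hdesc + 2 * μ * s * hstar + hprev' + hab + hexpand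

theorem mul_sq_norm_sub_le_agdLyapunov {f : E → ℝ} {μ : ℝ} {xstar x v : E} (hμ : 0 ≤ μ)
    (hsc : StrongConvexOn univ μ f) (hf : DifferentiableAt ℝ f xstar)
    (hstar : gradient f xstar = 0) :
    μ / 2 * ‖x - xstar‖ ^ 2 ≤ agdLyapunov f μ xstar x v := by
  have := hsc.add_inner_add_le_of_hasGradientAt (mem_univ xstar) (mem_univ x) hf.hasGradientAt
  rw [hstar, inner_zero_left] at this
  unfold agdLyapunov
  nlinarith [sq_nonneg ‖v - xstar‖]

theorem agdLyapunov_self_le {f : E → ℝ} {μ L : ℝ} {xstar x : E} (hf : Differentiable ℝ f)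
    (hlip : ∀ a b, ‖gradient f a - gradient f b‖ ≤ L * ‖a - b‖) (hstar : gradient f xstar = 0) :
    agdLyapunov f μ xstar x x ≤ (L + μ) / 2 * ‖x - xstar‖ ^ 2 := by
  have := le_add_inner_gradient_add_of_lipschitz hf hlip xstar x
  rw [hstar, inner_zero_left] at this
  unfold agdLyapunov
  linarith

end

theorem agd_convergence_iterate_distance
    (d : ℕ) (h : EV d → ℝ) (μh Lh : ℝ) (hμ : 0 < μh) (hμL : μh ≤ Lh)
    (hdiff : Differentiable ℝ h)
    (hsc : StrongConvexOn Set.univ μh h)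
    (hlip : ∀ x y : EV d, ‖gradient h x - gradient h y‖ ≤ Lh * ‖x - y‖)
    (zstar : EV d) (hmin : ∀ z, h zstar ≤ h z)
    (z0 : EV d) (z zt : ℕ → EV d)
    (hz0 : z 0 = z0) (hzt0 : zt 0 = z0)
    (hstep : ∀ k : ℕ, z (k + 1) = zt k - (1 / Lh) • gradient h (zt k))
    (hmom : ∀ k : ℕ, zt (k + 1) = z (k + 1)
        + ((Real.sqrt (Lh / μh) - 1) / (Real.sqrt (Lh / μh) + 1)) • (z (k + 1) - z k)) :
    ∀ K : ℕ, ‖z K - zstar‖ ^ 2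
      ≤ (1 + Lh / μh) * (1 - 1 / Real.sqrt (Lh / μh)) ^ K * ‖z0 - zstar‖ ^ 2 := by
  intro K
  set s := Real.sqrt (Lh / μh)
  have hs : 1 ≤ s := Real.one_le_sqrt.mpr ((one_le_div hμ).mpr hμL)
  have hL : Lh = μh * s ^ 2 := by
    rw [Real.sq_sqrt (div_pos (hμ.trans_le hμL) hμ).le]; field_simp
  have hgrad : gradient h zstar = 0 := by
    have hloc : IsLocalMin h zstar := Filter.Eventually.of_forall hmin
    rw [gradient, hloc.fderiv_eq_zero, map_zero]
  set Φ : ℕ → ℝ := fun k => agdLyapunov h μh zstar (z k) ((s + 1) • zt k - s • z k)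
  have hrate : 0 ≤ 1 - 1 / s := sub_nonneg.mpr (div_le_one_of_le₀ hs (by linarith))
  have hdecay : Φ K ≤ (1 - 1 / s) ^ K * Φ 0 := le_geom hrate K fun k _ => by
    simp only [Φ, smul_sub_smul_of_momentum (by positivity) (hmom k)]
    exact agdLyapunov_step_le hμ hs hL hsc hdiff hlip (hstep k)
  have hΦ0 : Φ 0 ≤ (Lh + μh) / 2 * ‖z0 - zstar‖ ^ 2 := by
    have hv0 : (s + 1) • z0 - s • z0 = z0 := by module
    simp only [Φ, hz0, hzt0, hv0]
    exact agdLyapunov_self_le hdiff hlip hgrad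
  have hΦK : μh / 2 * ‖z K - zstar‖ ^ 2 ≤ Φ K :=
    mul_sq_norm_sub_le_agdLyapunov hμ.le hsc (hdiff zstar) hgrad
  calc ‖z K - zstar‖ ^ 2 = 2 / μh * (μh / 2 * ‖z K - zstar‖ ^ 2) := by field_simp
    _ ≤ 2 / μh * ((1 - 1 / s) ^ K * Φ 0) := by gcongr 2 / μh * ?_; exact hΦK.trans hdecay
    _ ≤ 2 / μh * ((1 - 1 / s) ^ K * ((Lh + μh) / 2 * ‖z0 - zstar‖ ^ 2)) := by gcongr
    _ = (1 + Lh / μh) * (1 - 1 / s) ^ K * ‖z0 - zstar‖ ^ 2 := by field_simp; ring
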